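/- arXiv:2401.09080 — 3 statements merged into one kernel-verified Lean document; each statement's English description precedes it below -/
import Mathlib

section
/- Let V, Q be Hilbert spaces, Λ_i ⊂ Q closed convex sets associated with data (f_i, g_i, σ_{y,i}) for i = 1,2, and let (u_i, p_i, λ_i) solve the corresponding mixed elastoplasticity problems. Then ‖(u₂−u₁, p₂−p₁)‖ + ‖λ₂−λ₁‖_{0,Ω} ≤ ((1+c_a)/α)(‖σ_{y,2}−σ_{y,1}‖_{0,Ω} + ‖f₂−f₁‖_{V*} + c_tr‖g₂−g₁‖_{−1/2,Γ_N}); i.e., the solution depends Lipschitz-continuously on the data. -/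
open MeasureTheory Matrix

/-- Frobenius inner product of two real matrices. -/
noncomputable def frob {d : ℕ} (A B : Matrix (Fin d) (Fin d) ℝ) : ℝ :=
  ∑ i, ∑ j, A i j * B i j

/-- Frobenius norm of a real matrix. -/
noncomputable def frobNorm {d : ℕ} (A : Matrix (Fin d) (Fin d) ℝ) : ℝ :=
  Real.sqrt (∑ i, ∑ j, (A i j) ^ 2)

/-- Matrix fields on ℝ^d. -/
abbrev MatField (d : ℕ) := (Fin d → ℝ) → Matrix (Fin d) (Fin d) ℝ

/-- Membership in Q = L²(Ω, S_{d,0}). -/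
def MemQ {d : ℕ} (Ω : Set (Fin d → ℝ)) (q : MatField d) : Prop :=
  AEStronglyMeasurable q (volume.restrict Ω) ∧ (∀ x, (q x).IsSymm) ∧
    (∀ x, Matrix.trace (q x) = 0) ∧ IntegrableOn (fun x => frobNorm (q x) ^ 2) Ω

/-- The norm on V × Q: ‖(v,q)‖² = ‖v‖²_{1,Ω} + ‖q‖²_{0,Ω}. -/
noncomputable def pairNorm {d : ℕ} {V : Type*} [NormedAddCommGroup V]
    (Ω : Set (Fin d → ℝ)) (v : V) (q : MatField d) : ℝ :=
  Real.sqrt (‖v‖ ^ 2 + ∫ x in Ω, frobNorm (q x) ^ 2)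

set_option maxHeartbeats 1000000

noncomputable def matE {d : ℕ} (A : Matrix (Fin d) (Fin d) ℝ) :
    EuclideanSpace ℝ (Fin d × Fin d) := WithLp.toLp 2 (fun p : Fin d × Fin d => A p.1 p.2)
lemma matE_sub {d : ℕ} (A B : Matrix (Fin d) (Fin d) ℝ) : matE (A - B) = matE A - matE B := rfl
lemma matE_smul {d : ℕ} (c : ℝ) (A : Matrix (Fin d) (Fin d) ℝ) : matE (c • A) = c • matE A := rfl
lemma matE_neg {d : ℕ} (A : Matrix (Fin d) (Fin d) ℝ) : matE (-A) = - matE A := rfl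
lemma frobNorm_eq {d : ℕ} (A : Matrix (Fin d) (Fin d) ℝ) : frobNorm A = ‖matE A‖ := by
  rw [EuclideanSpace.norm_eq, frobNorm]; congr 1; rw [Fintype.sum_prod_type]
  simp [matE, Real.norm_eq_abs, sq_abs]
lemma frob_eq {d : ℕ} (A B : Matrix (Fin d) (Fin d) ℝ) :
    frob A B = inner ℝ (matE A) (matE B) := by
  rw [PiLp.inner_apply, frob, Fintype.sum_prod_type]
  simp [matE, RCLike.inner_apply, conj_trivial, mul_comm]

-- derived
lemma frobNorm_nonneg {d : ℕ} (A : Matrix (Fin d) (Fin d) ℝ) : 0 ≤ frobNorm A :=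
  Real.sqrt_nonneg _
lemma frob_self {d : ℕ} (A : Matrix (Fin d) (Fin d) ℝ) : frob A A = frobNorm A ^ 2 := by
  rw [frob_eq, frobNorm_eq, real_inner_self_eq_norm_sq]
lemma abs_frob_le {d : ℕ} (A B : Matrix (Fin d) (Fin d) ℝ) :
    |frob A B| ≤ frobNorm A * frobNorm B := by
  rw [frob_eq, frobNorm_eq, frobNorm_eq]; exact abs_real_inner_le_norm _ _
lemma frob_le {d : ℕ} (A B : Matrix (Fin d) (Fin d) ℝ) :
    frob A B ≤ frobNorm A * frobNorm B :=
  le_trans (le_abs_self _) (abs_frob_le A B)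
lemma frob_smul_left {d : ℕ} (c : ℝ) (A B : Matrix (Fin d) (Fin d) ℝ) :
    frob (c • A) B = c * frob A B := by
  rw [frob_eq, frob_eq, matE_smul, real_inner_smul_left]
lemma frob_sub_left {d : ℕ} (A B C : Matrix (Fin d) (Fin d) ℝ) :
    frob (A - B) C = frob A C - frob B C := by
  rw [frob_eq, frob_eq, frob_eq, matE_sub, inner_sub_left]
lemma frob_sub_right {d : ℕ} (A B C : Matrix (Fin d) (Fin d) ℝ) :
    frob A (B - C) = frob A B - frob A C := by
  rw [frob_eq, frob_eq, frob_eq, matE_sub, inner_sub_right]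
lemma frobNorm_smul {d : ℕ} (c : ℝ) (A : Matrix (Fin d) (Fin d) ℝ) :
    frobNorm (c • A) = |c| * frobNorm A := by
  rw [frobNorm_eq, frobNorm_eq, matE_smul, norm_smul, Real.norm_eq_abs]
lemma frobNorm_neg {d : ℕ} (A : Matrix (Fin d) (Fin d) ℝ) : frobNorm (-A) = frobNorm A := by
  rw [frobNorm_eq, frobNorm_eq, matE_neg, norm_neg]
lemma abs_frobNorm_sub_frobNorm_le {d : ℕ} (A B : Matrix (Fin d) (Fin d) ℝ) :
    |frobNorm A - frobNorm B| ≤ frobNorm (A - B) := by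
  rw [frobNorm_eq, frobNorm_eq, frobNorm_eq, matE_sub]; exact abs_norm_sub_norm_le _ _
lemma frobNorm_sub_le {d : ℕ} (A B : Matrix (Fin d) (Fin d) ℝ) :
    frobNorm (A - B) ≤ frobNorm A + frobNorm B := by
  rw [frobNorm_eq, frobNorm_eq, frobNorm_eq, matE_sub]; exact norm_sub_le _ _
lemma frobNorm_eq_zero {d : ℕ} {A : Matrix (Fin d) (Fin d) ℝ} (h : frobNorm A = 0) : A = 0 := by
  rw [frobNorm_eq, norm_eq_zero] at h
  funext i j
  exact congrArg (fun v : EuclideanSpace ℝ (Fin d × Fin d) => v (i, j)) h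
lemma continuous_frobNorm {d : ℕ} : Continuous (frobNorm (d := d)) := by
  unfold frobNorm
  apply Real.continuous_sqrt.comp
  apply continuous_finset_sum _ fun i _ => ?_
  apply continuous_finset_sum _ fun j _ => ?_
  exact ((continuous_apply j).comp (continuous_apply i)).pow 2

noncomputable def matUnit {d : ℕ} (A : Matrix (Fin d) (Fin d) ℝ) : Matrix (Fin d) (Fin d) ℝ :=
  (frobNorm A)⁻¹ • A

lemma frobNorm_matUnit_le {d : ℕ} (A : Matrix (Fin d) (Fin d) ℝ) : frobNorm (matUnit A) ≤ 1 := by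
  rw [matUnit, frobNorm_smul, abs_inv, abs_of_nonneg (frobNorm_nonneg A)]
  rcases eq_or_lt_of_le (frobNorm_nonneg A) with h | h
  · rw [← h]; simp
  · rw [inv_mul_cancel₀ (ne_of_gt h)]

lemma frob_matUnit_self {d : ℕ} (A : Matrix (Fin d) (Fin d) ℝ) :
    frob (matUnit A) A = frobNorm A := by
  rw [matUnit, frob_smul_left, frob_self]
  rcases eq_or_lt_of_le (frobNorm_nonneg A) with h | h
  · rw [← h]; simp
  · field_simp

lemma frob_matUnit_le {d : ℕ} (A B : Matrix (Fin d) (Fin d) ℝ) :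
    frob (matUnit A) B ≤ frobNorm B := by
  calc frob (matUnit A) B ≤ frobNorm (matUnit A) * frobNorm B := frob_le _ _
  _ ≤ 1 * frobNorm B :=
      mul_le_mul_of_nonneg_right (frobNorm_matUnit_le A) (frobNorm_nonneg B)
  _ = frobNorm B := one_mul _

noncomputable instance matMeasurableSpace {d : ℕ} : MeasurableSpace (Matrix (Fin d) (Fin d) ℝ) :=
  inferInstanceAs (MeasurableSpace (Fin d → Fin d → ℝ))
instance matBorelSpace {d : ℕ} : BorelSpace (Matrix (Fin d) (Fin d) ℝ) :=
  inferInstanceAs (BorelSpace (Fin d → Fin d → ℝ))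

lemma measurable_frobNorm {d : ℕ} : Measurable (frobNorm (d := d)) :=
  continuous_frobNorm.measurable

lemma measurable_matUnit {d : ℕ} : Measurable (matUnit (d := d)) := by
  apply measurable_pi_lambda _ fun i => measurable_pi_lambda _ fun j => ?_
  have : (fun A : Matrix (Fin d) (Fin d) ℝ => matUnit A i j)
      = fun A => (frobNorm A)⁻¹ * A i j := rfl
  rw [this]
  exact (measurable_frobNorm.inv).mul
    (((measurable_pi_apply j).comp (measurable_pi_apply i)))

-- integral Cauchy-Schwarz for nonnegative functions
lemma integral_CS {X : Type*} [MeasurableSpace X] (μ : Measure X) (f g : X → ℝ)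
    (hfg : Integrable (fun x => f x * g x) μ)
    (hf2 : Integrable (fun x => f x ^ 2) μ) (hg2 : Integrable (fun x => g x ^ 2) μ)
    (hf : ∀ x, 0 ≤ f x) (hg : ∀ x, 0 ≤ g x) :
    ∫ x, f x * g x ∂μ ≤ Real.sqrt (∫ x, f x ^ 2 ∂μ) * Real.sqrt (∫ x, g x ^ 2 ∂μ) := by
  set A := ∫ x, f x ^ 2 ∂μ with hA
  set B := ∫ x, g x ^ 2 ∂μ with hB
  have hA0 : 0 ≤ A := integral_nonneg fun x => sq_nonneg _
  have hB0 : 0 ≤ B := integral_nonneg fun x => sq_nonneg _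
  have key : ∀ ε : ℝ, 0 < ε → ∫ x, f x * g x ∂μ ≤ (ε * A + B / ε) / 2 := by
    intro ε hε
    have hpt : ∀ x, f x * g x ≤ (ε * f x ^ 2 + g x ^ 2 / ε) / 2 := by
      intro x
      have key0 : 2 * ε * (f x * g x) ≤ ε ^ 2 * f x ^ 2 + g x ^ 2 := by
        nlinarith [sq_nonneg (ε * f x - g x)]
      have hrw : ε * f x ^ 2 + g x ^ 2 / ε = (ε ^ 2 * f x ^ 2 + g x ^ 2) / ε := by
        field_simp
      rw [hrw, div_div, le_div_iff₀ (by positivity)]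
      nlinarith [key0]
    calc ∫ x, f x * g x ∂μ ≤ ∫ x, (ε * f x ^ 2 + g x ^ 2 / ε) / 2 ∂μ :=
          integral_mono hfg (((hf2.const_mul ε).add (hg2.div_const ε)).div_const 2) hpt
      _ = (ε * A + B / ε) / 2 := by
          rw [integral_div, integral_add (hf2.const_mul ε) (hg2.div_const ε),
            integral_const_mul, integral_div]
  rcases eq_or_lt_of_le hA0 with hA' | hA'
  · -- A = 0
    apply le_of_forall_pos_le_add
    intro δ hδ
    have hε : (0:ℝ) < B / (2 * δ) + 1 := by positivity
    have := key _ hε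
    have hb : B / (B / (2*δ) + 1) ≤ 2 * δ := by
      rw [div_le_iff₀ hε]
      have hexp : (B / (2*δ) + 1) * (2*δ) = B + 2*δ := by field_simp
      nlinarith [hexp]
    have : ∫ x, f x * g x ∂μ ≤ δ := by
      rw [← hA'] at this
      calc ∫ x, f x * g x ∂μ ≤ ((B / (2*δ) + 1) * 0 + B / (B / (2*δ) + 1)) / 2 := this
        _ ≤ (0 + 2 * δ) / 2 := by linarith
        _ = δ := by ring
    have hs : 0 ≤ Real.sqrt A * Real.sqrt B := by positivity
    linarith
  · rcases eq_or_lt_of_le hB0 with hB' | hB'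
    · -- B = 0
      apply le_of_forall_pos_le_add
      intro δ hδ
      have hε : (0:ℝ) < 2 * δ / A := by positivity
      have := key _ hε
      rw [← hB'] at this
      have : ∫ x, f x * g x ∂μ ≤ δ := by
        calc ∫ x, f x * g x ∂μ ≤ (2 * δ / A * A + 0 / (2 * δ / A)) / 2 := this
          _ = δ := by field_simp; ring
      have hs : 0 ≤ Real.sqrt A * Real.sqrt B := by positivity
      linarith
    · -- A, B > 0
      have hsA : Real.sqrt A > 0 := Real.sqrt_pos.mpr hA'
      have hsB : Real.sqrt B > 0 := Real.sqrt_pos.mpr hB'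
      have hε : (0:ℝ) < Real.sqrt B / Real.sqrt A := by positivity
      have := key _ hε
      have hAe : Real.sqrt A ^ 2 = A := Real.sq_sqrt hA0
      have hBe : Real.sqrt B ^ 2 = B := Real.sq_sqrt hB0
      have heq : (Real.sqrt B / Real.sqrt A * A + B / (Real.sqrt B / Real.sqrt A)) / 2
          = Real.sqrt A * Real.sqrt B := by
        field_simp
        nlinarith [hsA, hsB]
      linarith [this, heq ▸ this]

instance matPseudoMetrizable {d : ℕ} :
    TopologicalSpace.PseudoMetrizableSpace (Matrix (Fin d) (Fin d) ℝ) :=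
  inferInstanceAs (TopologicalSpace.PseudoMetrizableSpace (Fin d → Fin d → ℝ))
instance matSecondCountable {d : ℕ} :
    SecondCountableTopology (Matrix (Fin d) (Fin d) ℝ) :=
  inferInstanceAs (SecondCountableTopology (Fin d → Fin d → ℝ))

section Meas
variable {d : ℕ} {X : Type*} [MeasurableSpace X] {μ : Measure X}

lemma aesm_entry {q : X → Matrix (Fin d) (Fin d) ℝ} (hq : AEStronglyMeasurable q μ)
    (i j : Fin d) : AEStronglyMeasurable (fun x => q x i j) μ := by
  exact (((continuous_apply j).comp (continuous_apply i)) :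
    Continuous fun A : Matrix (Fin d) (Fin d) ℝ => A i j).comp_aestronglyMeasurable hq

lemma aesm_frobNorm {q : X → Matrix (Fin d) (Fin d) ℝ} (hq : AEStronglyMeasurable q μ) :
    AEStronglyMeasurable (fun x => frobNorm (q x)) μ :=
  continuous_frobNorm.comp_aestronglyMeasurable hq

lemma aesm_frob {q r : X → Matrix (Fin d) (Fin d) ℝ} (hq : AEStronglyMeasurable q μ)
    (hr : AEStronglyMeasurable r μ) :
    AEStronglyMeasurable (fun x => frob (q x) (r x)) μ := by
  unfold frob
  apply Finset.aestronglyMeasurable_fun_sum _ fun i _ => ?_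
  apply Finset.aestronglyMeasurable_fun_sum _ fun j _ => ?_
  exact (aesm_entry hq i j).mul (aesm_entry hr i j)

lemma aesm_matUnit {q : X → Matrix (Fin d) (Fin d) ℝ} (hq : AEStronglyMeasurable q μ) :
    AEStronglyMeasurable (fun x => matUnit (q x)) μ :=
  (measurable_matUnit.comp_aemeasurable hq.aemeasurable).aestronglyMeasurable

lemma integrable_mul_of_sq {f g : X → ℝ} (hf : AEStronglyMeasurable f μ)
    (hg : AEStronglyMeasurable g μ) (hf2 : Integrable (fun x => f x ^ 2) μ)
    (hg2 : Integrable (fun x => g x ^ 2) μ) : Integrable (fun x => f x * g x) μ := by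
  have hb : Integrable (fun x => (f x ^ 2 + g x ^ 2) / 2) μ := (hf2.add hg2).div_const 2
  refine hb.mono' (hf.mul hg) ?_
  filter_upwards with x
  simp only [Pi.mul_apply, Pi.add_apply, Real.norm_eq_abs, abs_mul]
  nlinarith [sq_nonneg (|f x| - |g x|), sq_abs (f x), sq_abs (g x), abs_nonneg (f x),
    abs_nonneg (g x)]

lemma integrable_frob {q r : X → Matrix (Fin d) (Fin d) ℝ} (hq : AEStronglyMeasurable q μ)
    (hr : AEStronglyMeasurable r μ) (hq2 : Integrable (fun x => frobNorm (q x) ^ 2) μ)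
    (hr2 : Integrable (fun x => frobNorm (r x) ^ 2) μ) :
    Integrable (fun x => frob (q x) (r x)) μ := by
  have hb : Integrable (fun x => frobNorm (q x) * frobNorm (r x)) μ :=
    integrable_mul_of_sq (aesm_frobNorm hq) (aesm_frobNorm hr) hq2 hr2
  refine hb.mono' (aesm_frob hq hr) ?_
  filter_upwards with x
  rw [Real.norm_eq_abs]
  exact abs_frob_le _ _
end Meas

section MemQLemmas
variable {d : ℕ} {Ω : Set (Fin d → ℝ)}

lemma MemQ.sub' {q r : MatField d} (hq : MemQ Ω q) (hr : MemQ Ω r) :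
    MemQ Ω (fun x => q x - r x) := by
  obtain ⟨hqm, hqs, hqt, hqi⟩ := hq
  obtain ⟨hrm, hrs, hrt, hri⟩ := hr
  refine ⟨hqm.sub hrm, fun x => ?_, fun x => ?_, ?_⟩
  · rw [Matrix.IsSymm, Matrix.transpose_sub, hqs x, hrs x]
  · rw [Matrix.trace_sub, hqt, hrt, sub_zero]
  · have hb : IntegrableOn (fun x => 2 * frobNorm (q x) ^ 2 + 2 * frobNorm (r x) ^ 2) Ω :=
      (hqi.const_mul 2).add (hri.const_mul 2)
    refine hb.mono' ((aesm_frobNorm (hqm.sub hrm)).pow 2) ?_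
    filter_upwards with x
    rw [Real.norm_eq_abs, abs_of_nonneg (sq_nonneg _)]
    nlinarith [frobNorm_sub_le (q x) (r x), frobNorm_nonneg (q x), frobNorm_nonneg (r x),
      frobNorm_nonneg (q x - r x), sq_nonneg (frobNorm (q x) - frobNorm (r x))]

lemma MemQ.neg' {q : MatField d} (hq : MemQ Ω q) : MemQ Ω (fun x => -(q x)) := by
  obtain ⟨hqm, hqs, hqt, hqi⟩ := hq
  refine ⟨hqm.neg, fun x => ?_, fun x => ?_, ?_⟩
  · rw [Matrix.IsSymm, Matrix.transpose_neg, hqs x]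
  · rw [Matrix.trace_neg, hqt, neg_zero]
  · refine hqi.congr ?_
    filter_upwards with x
    rw [frobNorm_neg]

instance matContinuousSMul {d : ℕ} : ContinuousSMul ℝ (Matrix (Fin d) (Fin d) ℝ) :=
  inferInstanceAs (ContinuousSMul ℝ (Fin d → Fin d → ℝ))

lemma MemQ.smulUnit {σ : (Fin d → ℝ) → ℝ} {p : MatField d}
    (hσ : AEStronglyMeasurable σ (volume.restrict Ω))
    (hσ2 : IntegrableOn (fun x => σ x ^ 2) Ω) (hp : MemQ Ω p) :
    MemQ Ω (fun x => σ x • matUnit (p x)) := by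
  have hu : AEStronglyMeasurable (fun x => matUnit (p x)) (volume.restrict Ω) :=
    aesm_matUnit hp.1
  refine ⟨hσ.smul hu, fun x => ?_, fun x => ?_, ?_⟩
  · show (σ x • matUnit (p x)).IsSymm
    have hs : (matUnit (p x))ᵀ = matUnit (p x) := by
      rw [matUnit, Matrix.transpose_smul, hp.2.1 x]
    rw [Matrix.IsSymm, Matrix.transpose_smul, hs]
  · show Matrix.trace (σ x • matUnit (p x)) = 0
    have ht : Matrix.trace (matUnit (p x)) = 0 := by
      rw [matUnit, Matrix.trace_smul, hp.2.2.1 x, smul_zero]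
    rw [Matrix.trace_smul, ht, smul_zero]
  · refine hσ2.mono' ((aesm_frobNorm (hσ.smul hu)).pow 2) ?_
    filter_upwards with x
    rw [Real.norm_eq_abs, abs_of_nonneg (sq_nonneg _)]
    have h1 : frobNorm (σ x • matUnit (p x)) = |σ x| * frobNorm (matUnit (p x)) :=
      frobNorm_smul _ _
    rw [h1, mul_pow, sq_abs]
    have ht := frobNorm_matUnit_le (p x)
    have ht0 := frobNorm_nonneg (matUnit (p x))
    nlinarith [sq_nonneg (σ x), mul_nonneg (sq_nonneg (σ x)) (mul_nonneg ht0 ht0),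
      mul_le_one₀ ht ht0 ht, sq_nonneg (σ x * frobNorm (matUnit (p x)))]

lemma smulUnit_inLambda {σ : (Fin d → ℝ) → ℝ} {p : MatField d}
    (hσ : AEStronglyMeasurable σ (volume.restrict Ω))
    (hσ2 : IntegrableOn (fun x => σ x ^ 2) Ω)
    (hσpos : ∀ᵐ x ∂(volume.restrict Ω), 0 ≤ σ x) (hp : MemQ Ω p) :
    ∀ q : MatField d, MemQ Ω q →
      ∫ x in Ω, frob (σ x • matUnit (p x)) (q x) ≤ ∫ x in Ω, σ x * frobNorm (q x) := by
  intro q hq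
  have hμ : MemQ Ω (fun x => σ x • matUnit (p x)) := MemQ.smulUnit hσ hσ2 hp
  refine integral_mono_ae (integrable_frob hμ.1 hq.1 hμ.2.2.2 hq.2.2.2)
    (integrable_mul_of_sq hσ (aesm_frobNorm hq.1) hσ2 hq.2.2.2) ?_
  filter_upwards [hσpos] with x hx
  rw [frob_smul_left]
  exact mul_le_mul_of_nonneg_left (frob_matUnit_le _ _) hx

end MemQLemmas

/-- Lipschitz dependence of the solution of the mixed elastoplasticity
problem on the data (f, g, σ_y). -/
theorem statement12 {d : ℕ} (Ω : Set (Fin d → ℝ)) (hΩmeas : MeasurableSet Ω)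
    (hΩfin : volume Ω < ⊤)
    {V T : Type*} [NormedAddCommGroup V] [InnerProductSpace ℝ V] [CompleteSpace V]
    [NormedAddCommGroup T] [InnerProductSpace ℝ T] [CompleteSpace T]
    (a : (V × MatField d) →ₗ[ℝ] (V × MatField d) →ₗ[ℝ] ℝ)
    (hasymm : ∀ x y : V × MatField d, a x y = a y x)
    (ca α ctr : ℝ) (hca : 0 < ca) (hα : 0 < α) (hctr : 0 < ctr)
    (hcont : ∀ (v w : V) (q r : MatField d), MemQ Ω q → MemQ Ω r →
      a (v, q) (w, r) ≤ ca * pairNorm Ω v q * pairNorm Ω w r)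
    (hcoer : ∀ (v : V) (q : MatField d), MemQ Ω q →
      α * (‖v‖ ^ 2 + ∫ x in Ω, frobNorm (q x) ^ 2) ≤ a (v, q) (v, q))
    (γ : V →L[ℝ] T) (hγ : ∀ v : V, ‖γ v‖ ≤ ctr * ‖v‖)
    (f₁ f₂ : V →L[ℝ] ℝ) (g₁ g₂ : T →L[ℝ] ℝ)
    (σ₁ σ₂ : (Fin d → ℝ) → ℝ)
    (hσ₁meas : AEStronglyMeasurable σ₁ (volume.restrict Ω))
    (hσ₂meas : AEStronglyMeasurable σ₂ (volume.restrict Ω))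
    (hσ₁pos : ∀ᵐ x ∂(volume.restrict Ω), 0 ≤ σ₁ x)
    (hσ₂pos : ∀ᵐ x ∂(volume.restrict Ω), 0 ≤ σ₂ x)
    (hσ₁L2 : IntegrableOn (fun x => (σ₁ x) ^ 2) Ω)
    (hσ₂L2 : IntegrableOn (fun x => (σ₂ x) ^ 2) Ω)
    (u₁ u₂ : V) (p₁ p₂ lam₁ lam₂ : MatField d)
    (hp₁ : MemQ Ω p₁) (hp₂ : MemQ Ω p₂) (hlam₁ : MemQ Ω lam₁) (hlam₂ : MemQ Ω lam₂)
    -- λᵢ ∈ Λᵢ = {μ ∈ Q : (μ,q)_{0,Ω} ≤ ψᵢ(q) ∀ q ∈ Q}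
    (hlam₁Λ : ∀ q : MatField d, MemQ Ω q →
      ∫ x in Ω, frob (lam₁ x) (q x) ≤ ∫ x in Ω, σ₁ x * frobNorm (q x))
    (hlam₂Λ : ∀ q : MatField d, MemQ Ω q →
      ∫ x in Ω, frob (lam₂ x) (q x) ≤ ∫ x in Ω, σ₂ x * frobNorm (q x))
    -- the two mixed variational equations
    (heq₁ : ∀ (v : V) (q : MatField d), MemQ Ω q →
      a (u₁, p₁) (v, q) + ∫ x in Ω, frob (lam₁ x) (q x) = f₁ v + g₁ (γ v))
    (heq₂ : ∀ (v : V) (q : MatField d), MemQ Ω q →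
      a (u₂, p₂) (v, q) + ∫ x in Ω, frob (lam₂ x) (q x) = f₂ v + g₂ (γ v))
    -- the two mixed variational inequalities
    (hineq₁ : ∀ μ : MatField d, MemQ Ω μ →
      (∀ q : MatField d, MemQ Ω q →
        ∫ x in Ω, frob (μ x) (q x) ≤ ∫ x in Ω, σ₁ x * frobNorm (q x)) →
      ∫ x in Ω, frob (μ x - lam₁ x) (p₁ x) ≤ 0)
    (hineq₂ : ∀ μ : MatField d, MemQ Ω μ →
      (∀ q : MatField d, MemQ Ω q →
        ∫ x in Ω, frob (μ x) (q x) ≤ ∫ x in Ω, σ₂ x * frobNorm (q x)) →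
      ∫ x in Ω, frob (μ x - lam₂ x) (p₂ x) ≤ 0) :
    pairNorm Ω (u₂ - u₁) (p₂ - p₁)
        + Real.sqrt (∫ x in Ω, frobNorm (lam₂ x - lam₁ x) ^ 2)
      ≤ (1 + ca) / α *
        (Real.sqrt (∫ x in Ω, (σ₂ x - σ₁ x) ^ 2) + ‖f₂ - f₁‖ + ctr * ‖g₂ - g₁‖) := by
  classical
  set Dσ := Real.sqrt (∫ x in Ω, (σ₂ x - σ₁ x) ^ 2) with hDσdef
  set N := pairNorm Ω (u₂ - u₁) (p₂ - p₁) with hNdef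
  set L := Real.sqrt (∫ x in Ω, frobNorm (lam₂ x - lam₁ x) ^ 2) with hLdef
  have hδp : MemQ Ω (p₂ - p₁) := hp₂.sub' hp₁
  have hdl : MemQ Ω (lam₂ - lam₁) := hlam₂.sub' hlam₁
  have hdln : MemQ Ω (fun x => -(lam₂ x - lam₁ x)) := hdl.neg'
  have hδpm : AEStronglyMeasurable (fun x => p₂ x - p₁ x) (volume.restrict Ω) :=
    hp₂.1.sub hp₁.1
  have hdlm : AEStronglyMeasurable (fun x => lam₂ x - lam₁ x) (volume.restrict Ω) :=
    hlam₂.1.sub hlam₁.1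
  have hδp2 : IntegrableOn (fun x => frobNorm (p₂ x - p₁ x) ^ 2) Ω := hδp.2.2.2
  have hdl2 : IntegrableOn (fun x => frobNorm (lam₂ x - lam₁ x) ^ 2) Ω := hdl.2.2.2
  have hδσm : AEStronglyMeasurable (fun x => σ₂ x - σ₁ x) (volume.restrict Ω) :=
    hσ₂meas.sub hσ₁meas
  have hδσ2 : IntegrableOn (fun x => (σ₂ x - σ₁ x) ^ 2) Ω := by
    have hb : IntegrableOn (fun x => 2 * σ₁ x ^ 2 + 2 * σ₂ x ^ 2) Ω :=
      (hσ₁L2.const_mul 2).add (hσ₂L2.const_mul 2)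
    have hm : AEStronglyMeasurable (fun x => (σ₂ x - σ₁ x) ^ 2) (volume.restrict Ω) := by
      refine (hδσm.mul hδσm).congr ?_
      filter_upwards with x
      simp only [Pi.mul_apply]
      ring
    refine hb.mono' hm ?_
    filter_upwards with x
    rw [Real.norm_eq_abs, abs_of_nonneg (sq_nonneg _)]
    nlinarith [sq_nonneg (σ₁ x + σ₂ x)]
  have hDσ0 : 0 ≤ Dσ := Real.sqrt_nonneg _
  have hNnn : 0 ≤ N := Real.sqrt_nonneg _
  have hLnn : 0 ≤ L := Real.sqrt_nonneg _
  have hIδp0 : 0 ≤ ∫ x in Ω, frobNorm (p₂ x - p₁ x) ^ 2 :=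
    integral_nonneg fun x => sq_nonneg _
  have hIdl0 : 0 ≤ ∫ x in Ω, frobNorm (lam₂ x - lam₁ x) ^ 2 :=
    integral_nonneg fun x => sq_nonneg _
  -- step 1: difference of the two variational equations
  have hdiff : ∀ (v : V) (q : MatField d), MemQ Ω q →
      a (u₂ - u₁, p₂ - p₁) (v, q) + ∫ x in Ω, frob (lam₂ x - lam₁ x) (q x)
        = (f₂ v - f₁ v) + (g₂ (γ v) - g₁ (γ v)) := by
    intro v q hq
    have h1 := heq₁ v q hq
    have h2 := heq₂ v q hq
    have ha : a (u₂ - u₁, p₂ - p₁) (v, q) = a (u₂, p₂) (v, q) - a (u₁, p₁) (v, q) := by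
      have hprod : ((u₂ - u₁, p₂ - p₁) : V × MatField d) = (u₂, p₂) - (u₁, p₁) := rfl
      rw [hprod, map_sub, LinearMap.sub_apply]
    have hpt : ∀ x, frob (lam₂ x - lam₁ x) (q x)
        = frob (lam₂ x) (q x) - frob (lam₁ x) (q x) := fun x => frob_sub_left _ _ _
    have hint : ∫ x in Ω, frob (lam₂ x - lam₁ x) (q x)
        = (∫ x in Ω, frob (lam₂ x) (q x)) - ∫ x in Ω, frob (lam₁ x) (q x) := by
      simp only [hpt]
      exact integral_sub (integrable_frob hlam₂.1 hq.1 hlam₂.2.2.2 hq.2.2.2)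
        (integrable_frob hlam₁.1 hq.1 hlam₁.2.2.2 hq.2.2.2)
    rw [ha, hint]
    linarith
  -- integrability of products
  have s11 : IntegrableOn (fun x => σ₁ x * frobNorm (p₁ x)) Ω :=
    integrable_mul_of_sq hσ₁meas (aesm_frobNorm hp₁.1) hσ₁L2 hp₁.2.2.2
  have s12 : IntegrableOn (fun x => σ₁ x * frobNorm (p₂ x)) Ω :=
    integrable_mul_of_sq hσ₁meas (aesm_frobNorm hp₂.1) hσ₁L2 hp₂.2.2.2
  have s21 : IntegrableOn (fun x => σ₂ x * frobNorm (p₁ x)) Ω :=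
    integrable_mul_of_sq hσ₂meas (aesm_frobNorm hp₁.1) hσ₂L2 hp₁.2.2.2
  have s22 : IntegrableOn (fun x => σ₂ x * frobNorm (p₂ x)) Ω :=
    integrable_mul_of_sq hσ₂meas (aesm_frobNorm hp₂.1) hσ₂L2 hp₂.2.2.2
  have i11 : IntegrableOn (fun x => frob (lam₁ x) (p₁ x)) Ω :=
    integrable_frob hlam₁.1 hp₁.1 hlam₁.2.2.2 hp₁.2.2.2
  have i12 : IntegrableOn (fun x => frob (lam₁ x) (p₂ x)) Ω :=
    integrable_frob hlam₁.1 hp₂.1 hlam₁.2.2.2 hp₂.2.2.2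
  have i21 : IntegrableOn (fun x => frob (lam₂ x) (p₁ x)) Ω :=
    integrable_frob hlam₂.1 hp₁.1 hlam₂.2.2.2 hp₁.2.2.2
  have i22 : IntegrableOn (fun x => frob (lam₂ x) (p₂ x)) Ω :=
    integrable_frob hlam₂.1 hp₂.1 hlam₂.2.2.2 hp₂.2.2.2
  -- step 2a: (λᵢ, pᵢ) ≥ ∫ σᵢ |pᵢ|
  have c22 : ∫ x in Ω, σ₂ x * frobNorm (p₂ x) ≤ ∫ x in Ω, frob (lam₂ x) (p₂ x) := by
    have hμ : MemQ Ω (fun x => σ₂ x • matUnit (p₂ x)) := MemQ.smulUnit hσ₂meas hσ₂L2 hp₂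
    have h := hineq₂ _ hμ (smulUnit_inLambda hσ₂meas hσ₂L2 hσ₂pos hp₂)
    have hpt : ∀ x, frob (σ₂ x • matUnit (p₂ x) - lam₂ x) (p₂ x)
        = σ₂ x * frobNorm (p₂ x) - frob (lam₂ x) (p₂ x) := by
      intro x
      rw [frob_sub_left, frob_smul_left, frob_matUnit_self]
    simp only [hpt] at h
    rw [integral_sub s22 i22] at h
    linarith
  have c11 : ∫ x in Ω, σ₁ x * frobNorm (p₁ x) ≤ ∫ x in Ω, frob (lam₁ x) (p₁ x) := by
    have hμ : MemQ Ω (fun x => σ₁ x • matUnit (p₁ x)) := MemQ.smulUnit hσ₁meas hσ₁L2 hp₁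
    have h := hineq₁ _ hμ (smulUnit_inLambda hσ₁meas hσ₁L2 hσ₁pos hp₁)
    have hpt : ∀ x, frob (σ₁ x • matUnit (p₁ x) - lam₁ x) (p₁ x)
        = σ₁ x * frobNorm (p₁ x) - frob (lam₁ x) (p₁ x) := by
      intro x
      rw [frob_sub_left, frob_smul_left, frob_matUnit_self]
    simp only [hpt] at h
    rw [integral_sub s11 i11] at h
    linarith
  have c21 : ∫ x in Ω, frob (lam₂ x) (p₁ x) ≤ ∫ x in Ω, σ₂ x * frobNorm (p₁ x) :=
    hlam₂Λ p₁ hp₁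
  have c12 : ∫ x in Ω, frob (lam₁ x) (p₂ x) ≤ ∫ x in Ω, σ₁ x * frobNorm (p₂ x) :=
    hlam₁Λ p₂ hp₂
  -- expansion of (δλ, δp)
  have hexp : ∫ x in Ω, frob (lam₂ x - lam₁ x) (p₂ x - p₁ x)
      = (∫ x in Ω, frob (lam₂ x) (p₂ x)) - (∫ x in Ω, frob (lam₂ x) (p₁ x))
        - ((∫ x in Ω, frob (lam₁ x) (p₂ x)) - ∫ x in Ω, frob (lam₁ x) (p₁ x)) := by
    have hpt : ∀ x, frob (lam₂ x - lam₁ x) (p₂ x - p₁ x)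
        = frob (lam₂ x) (p₂ x) - frob (lam₂ x) (p₁ x)
          - (frob (lam₁ x) (p₂ x) - frob (lam₁ x) (p₁ x)) := by
      intro x
      rw [frob_sub_left, frob_sub_right, frob_sub_right]
    simp only [hpt]
    have e1 : ∫ x in Ω, (frob (lam₂ x) (p₂ x) - frob (lam₂ x) (p₁ x)
          - (frob (lam₁ x) (p₂ x) - frob (lam₁ x) (p₁ x)))
        = (∫ x in Ω, (frob (lam₂ x) (p₂ x) - frob (lam₂ x) (p₁ x)))
          - ∫ x in Ω, (frob (lam₁ x) (p₂ x) - frob (lam₁ x) (p₁ x)) :=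
      integral_sub (i22.sub i21) (i12.sub i11)
    have e2 : ∫ x in Ω, (frob (lam₂ x) (p₂ x) - frob (lam₂ x) (p₁ x))
        = (∫ x in Ω, frob (lam₂ x) (p₂ x)) - ∫ x in Ω, frob (lam₂ x) (p₁ x) :=
      integral_sub i22 i21
    have e3 : ∫ x in Ω, (frob (lam₁ x) (p₂ x) - frob (lam₁ x) (p₁ x))
        = (∫ x in Ω, frob (lam₁ x) (p₂ x)) - ∫ x in Ω, frob (lam₁ x) (p₁ x) :=
      integral_sub i12 i11
    rw [e1, e2, e3]
  -- middle quantity and its integrability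
  have hmidint : IntegrableOn (fun x => (σ₂ x - σ₁ x) * (frobNorm (p₂ x) - frobNorm (p₁ x))) Ω := by
    have hsqdiff : IntegrableOn (fun x => (frobNorm (p₂ x) - frobNorm (p₁ x)) ^ 2) Ω := by
      have hm : AEStronglyMeasurable (fun x => (frobNorm (p₂ x) - frobNorm (p₁ x)) ^ 2)
          (volume.restrict Ω) := by
        refine (((aesm_frobNorm hp₂.1).sub (aesm_frobNorm hp₁.1)).mul
          ((aesm_frobNorm hp₂.1).sub (aesm_frobNorm hp₁.1))).congr ?_
        filter_upwards with x
        simp only [Pi.mul_apply, Pi.sub_apply]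
        ring
      refine hδp2.mono' hm ?_
      filter_upwards with x
      rw [Real.norm_eq_abs, abs_of_nonneg (sq_nonneg _)]
      have h := abs_frobNorm_sub_frobNorm_le (p₂ x) (p₁ x)
      nlinarith [abs_nonneg (frobNorm (p₂ x) - frobNorm (p₁ x)),
        sq_abs (frobNorm (p₂ x) - frobNorm (p₁ x)), frobNorm_nonneg (p₂ x - p₁ x)]
    exact integrable_mul_of_sq hδσm ((aesm_frobNorm hp₂.1).sub (aesm_frobNorm hp₁.1))
      hδσ2 hsqdiff
  have habsint : IntegrableOn (fun x => |σ₂ x - σ₁ x| * frobNorm (p₂ x - p₁ x)) Ω := by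
    have habsm : AEStronglyMeasurable (fun x => |σ₂ x - σ₁ x|) (volume.restrict Ω) := by
      refine hδσm.norm.congr ?_
      filter_upwards with x
      rw [Real.norm_eq_abs]
    have habs2 : IntegrableOn (fun x => |σ₂ x - σ₁ x| ^ 2) Ω := by
      refine hδσ2.congr ?_
      filter_upwards with x
      rw [sq_abs]
    exact integrable_mul_of_sq habsm (aesm_frobNorm hδpm) habs2 hδp2
  have hmid_exp : ∫ x in Ω, (σ₂ x - σ₁ x) * (frobNorm (p₂ x) - frobNorm (p₁ x))
      = (∫ x in Ω, σ₂ x * frobNorm (p₂ x)) - (∫ x in Ω, σ₂ x * frobNorm (p₁ x))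
        - ((∫ x in Ω, σ₁ x * frobNorm (p₂ x)) - ∫ x in Ω, σ₁ x * frobNorm (p₁ x)) := by
    have hpt : ∀ x, (σ₂ x - σ₁ x) * (frobNorm (p₂ x) - frobNorm (p₁ x))
        = σ₂ x * frobNorm (p₂ x) - σ₂ x * frobNorm (p₁ x)
          - (σ₁ x * frobNorm (p₂ x) - σ₁ x * frobNorm (p₁ x)) := by
      intro x
      ring
    simp only [hpt]
    have e1 : ∫ x in Ω, (σ₂ x * frobNorm (p₂ x) - σ₂ x * frobNorm (p₁ x)
          - (σ₁ x * frobNorm (p₂ x) - σ₁ x * frobNorm (p₁ x)))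
        = (∫ x in Ω, (σ₂ x * frobNorm (p₂ x) - σ₂ x * frobNorm (p₁ x)))
          - ∫ x in Ω, (σ₁ x * frobNorm (p₂ x) - σ₁ x * frobNorm (p₁ x)) :=
      integral_sub (s22.sub s21) (s12.sub s11)
    have e2 : ∫ x in Ω, (σ₂ x * frobNorm (p₂ x) - σ₂ x * frobNorm (p₁ x))
        = (∫ x in Ω, σ₂ x * frobNorm (p₂ x)) - ∫ x in Ω, σ₂ x * frobNorm (p₁ x) :=
      integral_sub s22 s21
    have e3 : ∫ x in Ω, (σ₁ x * frobNorm (p₂ x) - σ₁ x * frobNorm (p₁ x))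
        = (∫ x in Ω, σ₁ x * frobNorm (p₂ x)) - ∫ x in Ω, σ₁ x * frobNorm (p₁ x) :=
      integral_sub s12 s11
    rw [e1, e2, e3]
  -- Cauchy-Schwarz bound
  have hcs : ∫ x in Ω, |σ₂ x - σ₁ x| * frobNorm (p₂ x - p₁ x)
      ≤ Dσ * Real.sqrt (∫ x in Ω, frobNorm (p₂ x - p₁ x) ^ 2) := by
    have habsm : AEStronglyMeasurable (fun x => |σ₂ x - σ₁ x|) (volume.restrict Ω) := by
      refine hδσm.norm.congr ?_
      filter_upwards with x
      rw [Real.norm_eq_abs]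
    have habs2 : IntegrableOn (fun x => |σ₂ x - σ₁ x| ^ 2) Ω := by
      refine hδσ2.congr ?_
      filter_upwards with x
      rw [sq_abs]
    have h := integral_CS (volume.restrict Ω) (fun x => |σ₂ x - σ₁ x|)
      (fun x => frobNorm (p₂ x - p₁ x)) habsint habs2 hδp2
      (fun x => abs_nonneg _) (fun x => frobNorm_nonneg _)
    simp only [sq_abs] at h
    exact h
  -- pointwise lower bound for the middle term
  have hmid_low : -∫ x in Ω, |σ₂ x - σ₁ x| * frobNorm (p₂ x - p₁ x)
      ≤ ∫ x in Ω, (σ₂ x - σ₁ x) * (frobNorm (p₂ x) - frobNorm (p₁ x)) := by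
    rw [← integral_neg]
    refine integral_mono habsint.neg hmidint ?_
    intro x
    simp only [Pi.neg_apply]
    have h1 : |(σ₂ x - σ₁ x) * (frobNorm (p₂ x) - frobNorm (p₁ x))|
        ≤ |σ₂ x - σ₁ x| * frobNorm (p₂ x - p₁ x) := by
      rw [abs_mul]
      exact mul_le_mul_of_nonneg_left (abs_frobNorm_sub_frobNorm_le _ _) (abs_nonneg _)
    have h2 := neg_abs_le ((σ₂ x - σ₁ x) * (frobNorm (p₂ x) - frobNorm (p₁ x)))
    linarith
  -- step 2 conclusion: lower bound on (δλ, δp)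
  have hI : -(Dσ * Real.sqrt (∫ x in Ω, frobNorm (p₂ x - p₁ x) ^ 2))
      ≤ ∫ x in Ω, frob (lam₂ x - lam₁ x) (p₂ x - p₁ x) := by
    rw [hexp]
    linarith
  -- step 3: coercivity bound for N
  have hNeq : N = Real.sqrt (‖u₂ - u₁‖ ^ 2 + ∫ x in Ω, frobNorm (p₂ x - p₁ x) ^ 2) := by
    rw [hNdef, pairNorm]
    simp only [Pi.sub_apply]
  have hN2 : N ^ 2 = ‖u₂ - u₁‖ ^ 2 + ∫ x in Ω, frobNorm (p₂ x - p₁ x) ^ 2 := by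
    rw [hNeq]
    exact Real.sq_sqrt (add_nonneg (sq_nonneg _) hIδp0)
  have hup : ‖u₂ - u₁‖ ≤ N := by
    calc ‖u₂ - u₁‖ = Real.sqrt (‖u₂ - u₁‖ ^ 2) := (Real.sqrt_sq (norm_nonneg _)).symm
      _ ≤ Real.sqrt (‖u₂ - u₁‖ ^ 2 + ∫ x in Ω, frobNorm (p₂ x - p₁ x) ^ 2) :=
        Real.sqrt_le_sqrt (by linarith)
      _ = N := hNeq.symm
  have hpp : Real.sqrt (∫ x in Ω, frobNorm (p₂ x - p₁ x) ^ 2) ≤ N := by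
    calc Real.sqrt (∫ x in Ω, frobNorm (p₂ x - p₁ x) ^ 2)
        ≤ Real.sqrt (‖u₂ - u₁‖ ^ 2 + ∫ x in Ω, frobNorm (p₂ x - p₁ x) ^ 2) :=
        Real.sqrt_le_sqrt (by linarith [sq_nonneg ‖u₂ - u₁‖])
      _ = N := hNeq.symm
  have hco := hcoer (u₂ - u₁) (p₂ - p₁) hδp
  have hde := hdiff (u₂ - u₁) (p₂ - p₁) hδp
  have hfu : f₂ (u₂ - u₁) - f₁ (u₂ - u₁) ≤ ‖f₂ - f₁‖ * ‖u₂ - u₁‖ := by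
    have h1 : f₂ (u₂ - u₁) - f₁ (u₂ - u₁) = (f₂ - f₁) (u₂ - u₁) := rfl
    have h2 := (f₂ - f₁).le_opNorm (u₂ - u₁)
    rw [Real.norm_eq_abs] at h2
    calc f₂ (u₂ - u₁) - f₁ (u₂ - u₁) = (f₂ - f₁) (u₂ - u₁) := h1
      _ ≤ |(f₂ - f₁) (u₂ - u₁)| := le_abs_self _
      _ ≤ ‖f₂ - f₁‖ * ‖u₂ - u₁‖ := h2
  have hgu : g₂ (γ (u₂ - u₁)) - g₁ (γ (u₂ - u₁)) ≤ ‖g₂ - g₁‖ * (ctr * ‖u₂ - u₁‖) := by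
    have h1 : g₂ (γ (u₂ - u₁)) - g₁ (γ (u₂ - u₁)) = (g₂ - g₁) (γ (u₂ - u₁)) := rfl
    have h2 := (g₂ - g₁).le_opNorm (γ (u₂ - u₁))
    rw [Real.norm_eq_abs] at h2
    calc g₂ (γ (u₂ - u₁)) - g₁ (γ (u₂ - u₁)) = (g₂ - g₁) (γ (u₂ - u₁)) := h1
      _ ≤ |(g₂ - g₁) (γ (u₂ - u₁))| := le_abs_self _
      _ ≤ ‖g₂ - g₁‖ * ‖γ (u₂ - u₁)‖ := h2
      _ ≤ ‖g₂ - g₁‖ * (ctr * ‖u₂ - u₁‖) :=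
        mul_le_mul_of_nonneg_left (hγ (u₂ - u₁)) (norm_nonneg _)
  -- normalize the integrand of hcoer and hdiff: (p₂ - p₁) x = p₂ x - p₁ x
  simp only [Pi.sub_apply] at hco hde
  have hαN : α * N ^ 2 ≤ (Dσ + ‖f₂ - f₁‖ + ctr * ‖g₂ - g₁‖) * N := by
    have hfN : ‖f₂ - f₁‖ * ‖u₂ - u₁‖ ≤ ‖f₂ - f₁‖ * N :=
      mul_le_mul_of_nonneg_left hup (norm_nonneg _)
    have hgN : ‖g₂ - g₁‖ * (ctr * ‖u₂ - u₁‖) ≤ ‖g₂ - g₁‖ * (ctr * N) :=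
      mul_le_mul_of_nonneg_left (mul_le_mul_of_nonneg_left hup hctr.le) (norm_nonneg _)
    have hDN : Dσ * Real.sqrt (∫ x in Ω, frobNorm (p₂ x - p₁ x) ^ 2) ≤ Dσ * N :=
      mul_le_mul_of_nonneg_left hpp hDσ0
    have hexpand : (Dσ + ‖f₂ - f₁‖ + ctr * ‖g₂ - g₁‖) * N
        = Dσ * N + ‖f₂ - f₁‖ * N + ‖g₂ - g₁‖ * (ctr * N) := by ring
    rw [hexpand, hN2]
    linarith
  have hD0 : 0 ≤ Dσ + ‖f₂ - f₁‖ + ctr * ‖g₂ - g₁‖ := by positivity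
  have hNle : N ≤ (Dσ + ‖f₂ - f₁‖ + ctr * ‖g₂ - g₁‖) / α := by
    rcases eq_or_lt_of_le hNnn with h0 | h0
    · rw [← h0]
      positivity
    · have h1 : α * N * N ≤ (Dσ + ‖f₂ - f₁‖ + ctr * ‖g₂ - g₁‖) * N := by nlinarith
      have h2 := le_of_mul_le_mul_right h1 h0
      rw [le_div_iff₀ hα]
      linarith
  -- step 4: bound on L
  have hLle : L ≤ ca * N := by
    have hde0 := hdiff 0 (lam₂ - lam₁) hdl
    simp only [Pi.sub_apply, map_zero, sub_self, add_zero, zero_add] at hde0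
    have hfs : ∫ x in Ω, frob (lam₂ x - lam₁ x) (lam₂ x - lam₁ x)
        = ∫ x in Ω, frobNorm (lam₂ x - lam₁ x) ^ 2 := by
      simp only [frob_self]
    have hL2 : L ^ 2 = ∫ x in Ω, frobNorm (lam₂ x - lam₁ x) ^ 2 :=
      Real.sq_sqrt hIdl0
    have hprod : (((0 : V), fun x => -(lam₂ x - lam₁ x)) : V × MatField d)
        = -(((0 : V), lam₂ - lam₁) : V × MatField d) := by
      rw [Prod.neg_mk, neg_zero]
      rfl
    have hmapneg : a (u₂ - u₁, p₂ - p₁) ((0 : V), fun x => -(lam₂ x - lam₁ x))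
        = - a (u₂ - u₁, p₂ - p₁) ((0 : V), lam₂ - lam₁) := by
      rw [hprod, map_neg]
    have hpn : pairNorm Ω ((0 : V)) (fun x => -(lam₂ x - lam₁ x)) = L := by
      rw [pairNorm, hLdef]
      simp only [norm_zero, frobNorm_neg]
      norm_num
    have hcb := hcont (u₂ - u₁) (0 : V) (p₂ - p₁) (fun x => -(lam₂ x - lam₁ x)) hδp hdln
    rw [← hNdef, hpn] at hcb
    have hval : a (u₂ - u₁, p₂ - p₁) ((0 : V), fun x => -(lam₂ x - lam₁ x))
        = ∫ x in Ω, frob (lam₂ x - lam₁ x) (lam₂ x - lam₁ x) := by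
      rw [hmapneg]
      linarith
    have hLsq : L ^ 2 ≤ ca * N * L := by
      rw [hL2, ← hfs, ← hval]
      exact hcb
    rcases eq_or_lt_of_le hLnn with h0 | h0
    · rw [← h0]
      exact mul_nonneg hca.le hNnn
    · have h1 : L * L ≤ ca * N * L := by nlinarith
      exact le_of_mul_le_mul_right h1 h0
  -- conclusion
  have hLle2 : L ≤ ca * ((Dσ + ‖f₂ - f₁‖ + ctr * ‖g₂ - g₁‖) / α) :=
    hLle.trans (mul_le_mul_of_nonneg_left hNle hca.le)
  have hfinal : (1 + ca) / α * (Dσ + ‖f₂ - f₁‖ + ctr * ‖g₂ - g₁‖)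
      = (Dσ + ‖f₂ - f₁‖ + ctr * ‖g₂ - g₁‖) / α
        + ca * ((Dσ + ‖f₂ - f₁‖ + ctr * ‖g₂ - g₁‖) / α) := by
    field_simp
  rw [hfinal]
  exact add_le_add hNle hLle2
end

section
/- Let H be a real Hilbert space, a : H × H → ℝ a continuous (constant c_a) coercive (constant α) bilinear form, M a Hilbert space, Q_h ⊂ M a closed subspace, Λ_h ⊂ Q_h nonempty closed convex with 0 ∈ Λ_h, b : H × M → ℝ given by b((v,q),μ) = (μ,q)_M as in the elastoplasticity setting, and ℓ a bounded linear form with ‖ℓ‖ ≤ L. If (x_h, λ_h) ∈ (V_h × Q_h) × Λ_h solves the discrete mixed problem a(x_h, y_h) + (λ_h, q_h)_M = ℓ(y_h) for all y_h = (v_h,q_h), and (μ_h − λ_h, p_h)_M ≤ 0 for all μ_h ∈ Λ_h (with x_h = (u_h,p_h)), then ‖x_h‖ ≤ L/α and ‖λ_h‖_M ≤ c_a L/α. -/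
/-- stability of the discrete mixed problem:
‖x_h‖ ≤ L/α and ‖λ_h‖ ≤ c_a L/α. -/
theorem statement14 {V M : Type*}
    [NormedAddCommGroup V] [InnerProductSpace ℝ V] [CompleteSpace V]
    [NormedAddCommGroup M] [InnerProductSpace ℝ M] [CompleteSpace M]
    (a : (V × M) →ₗ[ℝ] (V × M) →ₗ[ℝ] ℝ)
    (ca α L : ℝ) (hca : 0 < ca) (hα : 0 < α) (hL : 0 ≤ L)
    (hcont : ∀ x y : V × M,
      a x y ≤ ca * Real.sqrt (‖x.1‖ ^ 2 + ‖x.2‖ ^ 2) * Real.sqrt (‖y.1‖ ^ 2 + ‖y.2‖ ^ 2))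
    (hcoer : ∀ x : V × M, α * (‖x.1‖ ^ 2 + ‖x.2‖ ^ 2) ≤ a x x)
    (ℓ : V →L[ℝ] ℝ) (hℓ : ∀ v : V, ℓ v ≤ L * ‖v‖)
    (Λh : Set M) (hΛcl : IsClosed Λh) (hΛconv : Convex ℝ Λh) (hΛ0 : (0 : M) ∈ Λh)
    (uh : V) (ph : M) (lamh : M) (hlamh : lamh ∈ Λh)
    (heq : ∀ (v : V) (q : M), a (uh, ph) (v, q) + (inner ℝ lamh q : ℝ) = ℓ v)
    (hineq : ∀ μ ∈ Λh, (inner ℝ (μ - lamh) ph : ℝ) ≤ 0) :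
    Real.sqrt (‖uh‖ ^ 2 + ‖ph‖ ^ 2) ≤ L / α ∧ ‖lamh‖ ≤ ca * L / α := by
  set s := Real.sqrt (‖uh‖ ^ 2 + ‖ph‖ ^ 2) with hsdef
  have hnn : (0:ℝ) ≤ ‖uh‖ ^ 2 + ‖ph‖ ^ 2 := by positivity
  have hs2 : s ^ 2 = ‖uh‖ ^ 2 + ‖ph‖ ^ 2 := Real.sq_sqrt hnn
  have hsnn : 0 ≤ s := Real.sqrt_nonneg _
  have hip : (0:ℝ) ≤ inner ℝ lamh ph := by
    have h := hineq 0 hΛ0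
    rw [inner_sub_left, inner_zero_left] at h
    linarith
  have hu : ‖uh‖ ≤ s := by
    rw [hsdef]
    exact (Real.le_sqrt (norm_nonneg _) hnn).mpr (le_add_of_nonneg_right (by positivity))
  have key : α * s ^ 2 ≤ L * s := by
    have h1 := hcoer (uh, ph)
    have h2 := heq uh ph
    have h3 := hℓ uh
    simp only at h1
    have h4 : L * ‖uh‖ ≤ L * s := mul_le_mul_of_nonneg_left hu hL
    rw [hs2]
    linarith
  have hsb : s ≤ L / α := by
    rcases eq_or_lt_of_le hsnn with h | h
    · rw [← h]; exact div_nonneg hL hα.le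
    · rw [le_div_iff₀ hα]
      nlinarith
  refine ⟨hsb, ?_⟩
  have h0 := heq 0 (-lamh)
  rw [map_zero, inner_neg_right, real_inner_self_eq_norm_sq] at h0
  have hc := hcont (uh, ph) (0, -lamh)
  simp only [norm_neg] at hc
  have hsq : Real.sqrt (‖(0:V)‖ ^ 2 + ‖lamh‖ ^ 2) = ‖lamh‖ := by
    simp [Real.sqrt_sq (norm_nonneg _)]
  rw [hsq] at hc
  have hbound : ‖lamh‖ ^ 2 ≤ ca * s * ‖lamh‖ := by
    have ha : a (uh, ph) (0, -lamh) = ‖lamh‖ ^ 2 := by linarith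
    rw [ha] at hc
    exact hc
  rcases eq_or_lt_of_le (norm_nonneg lamh) with h | h
  · rw [← h]; exact div_nonneg (mul_nonneg hca.le hL) hα.le
  · have : ‖lamh‖ ≤ ca * s := by nlinarith
    calc ‖lamh‖ ≤ ca * s := this
      _ ≤ ca * (L / α) := mul_le_mul_of_nonneg_left hsb hca.le
      _ = ca * L / α := by ring
end

section
/- Quasi-optimality with consistency term (Theorem 8, abstract core): let (u,p,λ) solve the continuous mixed problem and (u_h,p_h,λ_h) the discrete one with V_h ⊂ V, Q_h ⊂ Q (conforming primal spaces) but Λ_h not necessarily contained in Λ. Then there exist constants c₁, c₂ > 0 depending only on c_a and α such that ‖(u−u_h, p−p_h)‖² + ‖λ−λ_h‖²_{0,Ω} ≤ c₁(‖(u−v_h, p−q_h)‖² + ‖λ−μ_h‖²_{0,Ω}) + c₂(λ_h − μ + λ − μ_h, p)_{0,Ω} for all (v_h, q_h, μ_h) ∈ V_h × Q_h × Λ_h and all μ ∈ Λ. -/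
set_option maxHeartbeats 800000 in
lemma alg17 (ca α E X t d T : ℝ) (hca : 0 < ca) (hα : 0 < α)
    (hE : 0 ≤ E) (hX : 0 ≤ X) (ht : 0 ≤ t) (hd : 0 ≤ d)
    (h1 : t ^ 2 ≤ t * d + ca * E * d + ca * E * t)
    (h2 : α * E ^ 2 ≤ ca * E * X + t * X + d * E + T) :
    E ^ 2 + t ^ 2 ≤ ((1 + 3 * ca ^ 2) * (12 * ca ^ 2 / α ^ 2 + 3 / α ^ 2 + 1 / (3 * ca ^ 2)) + 3) * (X ^ 2 + d ^ 2)
      + (2 * (1 + 3 * ca ^ 2) / α) * T := by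
  have L1 : t ^ 2 ≤ 3 * d ^ 2 + 3 * ca ^ 2 * E ^ 2 := by
    nlinarith [sq_nonneg (t - 2 * d), sq_nonneg (t - 2 * ca * E), sq_nonneg (ca * E - d)]
  have hpos : (0:ℝ) ≤ 6 * α * ca ^ 2 := by positivity
  have h2' := mul_le_mul_of_nonneg_left h2 hpos
  have L1' := mul_le_mul_of_nonneg_left L1 (by positivity : (0:ℝ) ≤ α ^ 2 / 3)
  have P : 3 * α ^ 2 * ca ^ 2 * E ^ 2 ≤ 36 * ca ^ 4 * X ^ 2 + (9 * ca ^ 2 + α ^ 2) * d ^ 2 + 6 * α * ca ^ 2 * T := by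
    nlinarith [sq_nonneg (ca * α * E - 3 * ca ^ 2 * X), sq_nonneg (ca * α * E - 3 * ca * d),
      sq_nonneg (α * t - 9 * ca ^ 2 * X), h2', L1']
  have h3 : (0:ℝ) < 3 * α ^ 2 * ca ^ 2 := by positivity
  rw [← mul_le_mul_iff_right₀ h3]
  have e₁ : 3 * α ^ 2 * ca ^ 2 * (((1 + 3 * ca ^ 2) * (12 * ca ^ 2 / α ^ 2 + 3 / α ^ 2 + 1 / (3 * ca ^ 2)) + 3) * (X ^ 2 + d ^ 2)
      + (2 * (1 + 3 * ca ^ 2) / α) * T)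
      = ((1 + 3 * ca ^ 2) * (36 * ca ^ 4 + 9 * ca ^ 2 + α ^ 2) + 9 * α ^ 2 * ca ^ 2) * (X ^ 2 + d ^ 2)
        + (1 + 3 * ca ^ 2) * (6 * α * ca ^ 2) * T := by
    field_simp
    ring
  rw [e₁]
  have P' := mul_le_mul_of_nonneg_left P (by positivity : (0:ℝ) ≤ 1 + 3 * ca ^ 2)
  have L1'' := mul_le_mul_of_nonneg_left L1 (le_of_lt h3)
  have hXd : (0:ℝ) ≤ (1 + 3 * ca ^ 2) * ((9 * ca ^ 2 + α ^ 2) * X ^ 2 + 36 * ca ^ 4 * d ^ 2) := by positivity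
  nlinarith [P', L1'', hXd]

/-- quasi-optimality with consistency term (abstract core of Theorem 8).
There exist constants c₁, c₂ > 0 depending only on the continuity constant c_a and
the coercivity constant α of the bilinear form a such that
‖(u−u_h, p−p_h)‖² + ‖λ−λ_h‖² ≤ c₁(‖(u−v_h, p−q_h)‖² + ‖λ−μ_h‖²)
  + c₂(λ_h − μ + λ − μ_h, p)
for all (v_h, q_h, μ_h) ∈ V_h × Q_h × Λ_h and all μ ∈ Λ, whenever (u,p,λ) solves the
continuous mixed problem and (u_h,p_h,λ_h) the discrete one (V_h ⊂ V, Q_h ⊂ Q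
conforming, Λ_h ⊂ Q_h not necessarily contained in Λ). -/
theorem statement17 (ca α : ℝ) (hca : 0 < ca) (hα : 0 < α) :
    ∃ c₁ c₂ : ℝ, 0 < c₁ ∧ 0 < c₂ ∧
      ∀ (V M : Type)
        [NormedAddCommGroup V] [InnerProductSpace ℝ V] [CompleteSpace V]
        [NormedAddCommGroup M] [InnerProductSpace ℝ M] [CompleteSpace M]
        (a : (V × M) →ₗ[ℝ] (V × M) →ₗ[ℝ] ℝ),
        (∀ x y : V × M, a x y = a y x) →
        (∀ x y : V × M, a x y ≤
          ca * Real.sqrt (‖x.1‖ ^ 2 + ‖x.2‖ ^ 2) * Real.sqrt (‖y.1‖ ^ 2 + ‖y.2‖ ^ 2)) →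
        (∀ x : V × M, α * (‖x.1‖ ^ 2 + ‖x.2‖ ^ 2) ≤ a x x) →
      ∀ (ℓ : V → ℝ) (Vh : Submodule ℝ V) (Qh : Submodule ℝ M)
        (Λ Λh : Set M), Λh ⊆ (Qh : Set M) →
      ∀ (u : V) (p : M) (lam : M) (uh : V) (ph : M) (lamh : M),
        lam ∈ Λ → lamh ∈ Λh → uh ∈ Vh → ph ∈ Qh →
        -- continuous mixed problem
        (∀ (v : V) (q : M), a (u, p) (v, q) + (inner ℝ lam q : ℝ) = ℓ v) →
        (∀ μ ∈ Λ, (inner ℝ (μ - lam) p : ℝ) ≤ 0) →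
        -- discrete mixed problem
        (∀ vh ∈ Vh, ∀ qh ∈ Qh, a (uh, ph) (vh, qh) + (inner ℝ lamh qh : ℝ) = ℓ vh) →
        (∀ μh ∈ Λh, (inner ℝ (μh - lamh) ph : ℝ) ≤ 0) →
      ∀ vh ∈ Vh, ∀ qh ∈ Qh, ∀ μh ∈ Λh, ∀ μ ∈ Λ,
        (‖u - uh‖ ^ 2 + ‖p - ph‖ ^ 2) + ‖lam - lamh‖ ^ 2
          ≤ c₁ * ((‖u - vh‖ ^ 2 + ‖p - qh‖ ^ 2) + ‖lam - μh‖ ^ 2)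
            + c₂ * (inner ℝ (lamh - μ + lam - μh) p : ℝ) := by
  have hca2 : (0:ℝ) < ca ^ 2 := pow_pos hca 2
  have hα2 : (0:ℝ) < α ^ 2 := pow_pos hα 2
  refine ⟨(1 + 3 * ca ^ 2) * (12 * ca ^ 2 / α ^ 2 + 3 / α ^ 2 + 1 / (3 * ca ^ 2)) + 3,
    2 * (1 + 3 * ca ^ 2) / α, ?_, div_pos (by linarith) hα, ?_⟩
  · have : (0:ℝ) < (1 + 3 * ca ^ 2) * (12 * ca ^ 2 / α ^ 2 + 3 / α ^ 2 + 1 / (3 * ca ^ 2)) :=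
      mul_pos (by linarith)
        (add_pos (add_pos (div_pos (by linarith) hα2) (div_pos (by norm_num) hα2))
          (div_pos one_pos (by linarith)))
    linarith
  intro V M _ _ _ _ _ _ a hsymm hcont hcoer ℓ Vh Qh Λ Λh hΛsub u p lam uh ph lamh
    hlam hlamh huh hph hP1 hP2 hD1 hD2 vh hvh qh hqh μh hμh μ hμ
  set E := Real.sqrt (‖u - uh‖ ^ 2 + ‖p - ph‖ ^ 2) with hEdef
  set X := Real.sqrt (‖u - vh‖ ^ 2 + ‖p - qh‖ ^ 2) with hXdef
  have hE2 : E ^ 2 = ‖u - uh‖ ^ 2 + ‖p - ph‖ ^ 2 := Real.sq_sqrt (by positivity)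
  have hX2 : X ^ 2 = ‖u - vh‖ ^ 2 + ‖p - qh‖ ^ 2 := Real.sq_sqrt (by positivity)
  set t := ‖lam - lamh‖ with htdef
  set d := ‖lam - μh‖ with hddef
  set T : ℝ := inner ℝ (lamh - μ + lam - μh) p with hTdef
  -- Galerkin orthogonality
  have hG : ∀ v' ∈ Vh, ∀ q' ∈ Qh,
      a (u - uh, p - ph) (v', q') = (inner ℝ (lamh - lam) q' : ℝ) := by
    intro v' hv' q' hq'
    have e1 := hP1 v' q'
    have e2 := hD1 v' hv' q' hq'
    have hsub : a ((u, p) - (uh, ph)) (v', q') = a (u, p) (v', q') - a (uh, ph) (v', q') := by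
      rw [map_sub]; rfl
    have hprod : ((u, p) - (uh, ph) : V × M) = (u - uh, p - ph) := rfl
    rw [← hprod, hsub, inner_sub_left]
    linarith
  -- bound ‖p - qh‖ ≤ X, ‖p - ph‖ ≤ E
  have hpq : ‖p - qh‖ ≤ X := by
    rw [hXdef]
    calc ‖p - qh‖ = Real.sqrt (‖p - qh‖ ^ 2) := (Real.sqrt_sq (norm_nonneg _)).symm
      _ ≤ _ := Real.sqrt_le_sqrt (by nlinarith [sq_nonneg ‖u - vh‖])
  have hpph : ‖p - ph‖ ≤ E := by
    rw [hEdef]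
    calc ‖p - ph‖ = Real.sqrt (‖p - ph‖ ^ 2) := (Real.sqrt_sq (norm_nonneg _)).symm
      _ ≤ _ := Real.sqrt_le_sqrt (by nlinarith [sq_nonneg ‖u - uh‖])
  have hEnn : (0:ℝ) ≤ E := Real.sqrt_nonneg _
  have hXnn : (0:ℝ) ≤ X := Real.sqrt_nonneg _
  -- h1 : multiplier bound
  have h1 : t ^ 2 ≤ t * d + ca * E * d + ca * E * t := by
    have hself : t ^ 2 = (inner ℝ (lam - lamh) (lam - lamh) : ℝ) :=
      (real_inner_self_eq_norm_sq _).symm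
    have hsplit : (inner ℝ (lam - lamh) (lam - lamh) : ℝ)
        = (inner ℝ (lam - lamh) (lam - μh) : ℝ) + (inner ℝ (lamh - lam) (lamh - μh) : ℝ) := by
      simp only [inner_sub_left, inner_sub_right]; ring
    have hb1 : (inner ℝ (lam - lamh) (lam - μh) : ℝ) ≤ t * d :=
      real_inner_le_norm _ _
    have hGq := hG 0 (zero_mem _) (lamh - μh) (Qh.sub_mem (hΛsub hlamh) (hΛsub hμh))
    have hb2 : (inner ℝ (lamh - lam) (lamh - μh) : ℝ) ≤ ca * E * ‖lamh - μh‖ := by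
      rw [← hGq]
      have := hcont (u - uh, p - ph) ((0 : V), lamh - μh)
      simpa [norm_zero, Real.sqrt_sq (norm_nonneg (lamh - μh))] using this
    have htri : ‖lamh - μh‖ ≤ t + d := by
      calc ‖lamh - μh‖ = ‖(lamh - lam) + (lam - μh)‖ := by congr 1; abel
        _ ≤ ‖lamh - lam‖ + ‖lam - μh‖ := norm_add_le _ _
        _ = t + d := by rw [norm_sub_rev]
    have hcaE : (0:ℝ) ≤ ca * E := mul_nonneg hca.le hEnn
    have := mul_le_mul_of_nonneg_left htri hcaE
    nlinarith [hself, hsplit, hb1, hb2]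
  -- h2 : energy bound
  have h2 : α * E ^ 2 ≤ ca * E * X + t * X + d * E + T := by
    have hcoe : α * E ^ 2 ≤ a (u - uh, p - ph) (u - uh, p - ph) := by
      rw [hE2]; exact hcoer (u - uh, p - ph)
    have hsum : ((u - vh, p - qh) : V × M) + (vh - uh, qh - ph) = (u - uh, p - ph) := by
      rw [Prod.mk_add_mk]; congr 1 <;> abel
    have hsplit : a (u - uh, p - ph) (u - uh, p - ph)
        = a (u - uh, p - ph) (u - vh, p - qh) + a (u - uh, p - ph) (vh - uh, qh - ph) := by
      rw [← hsum, map_add]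
    have hb1 : a (u - uh, p - ph) (u - vh, p - qh) ≤ ca * E * X :=
      hcont (u - uh, p - ph) (u - vh, p - qh)
    have hw := hG (vh - uh) (Vh.sub_mem hvh huh) (qh - ph) (Qh.sub_mem hqh hph)
    have hid : (inner ℝ (lamh - lam) (qh - ph) : ℝ)
        = (inner ℝ (lam - lamh) (p - qh) : ℝ) + (inner ℝ (lam - μh) (ph - p) : ℝ)
          + (inner ℝ (μh - lamh) ph : ℝ) - (inner ℝ (μh - lamh) p : ℝ) := by
      simp only [inner_sub_left, inner_sub_right]; ring
    have hc1 : (inner ℝ (lam - lamh) (p - qh) : ℝ) ≤ t * X := by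
      calc (inner ℝ (lam - lamh) (p - qh) : ℝ) ≤ ‖lam - lamh‖ * ‖p - qh‖ := real_inner_le_norm _ _
        _ ≤ t * X := mul_le_mul_of_nonneg_left hpq (norm_nonneg _)
    have hc2 : (inner ℝ (lam - μh) (ph - p) : ℝ) ≤ d * E := by
      calc (inner ℝ (lam - μh) (ph - p) : ℝ) ≤ ‖lam - μh‖ * ‖ph - p‖ := real_inner_le_norm _ _
        _ = d * ‖p - ph‖ := by rw [norm_sub_rev ph p]
        _ ≤ d * E := mul_le_mul_of_nonneg_left hpph (norm_nonneg _)
    have hc3 : (inner ℝ (μh - lamh) ph : ℝ) ≤ 0 := hD2 μh hμh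
    have hc4 : -(inner ℝ (μh - lamh) p : ℝ) ≤ T := by
      have hμp : (inner ℝ (μ - lam) p : ℝ) ≤ 0 := hP2 μ hμ
      have hTexp : T = (inner ℝ lamh p : ℝ) - (inner ℝ μh p : ℝ)
          + ((inner ℝ lam p : ℝ) - (inner ℝ μ p : ℝ)) := by
        rw [hTdef]; simp only [inner_sub_left, inner_add_left]; ring
      simp only [inner_sub_left] at hμp ⊢
      linarith
    rw [hsplit, hw, hid] at hcoe
    linarith
  have := alg17 ca α E X t d T hca hα hEnn hXnn (norm_nonneg _) (norm_nonneg _) h1 h2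
  rw [hE2, hX2] at this
  exact this
end
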